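/- arXiv:1812.10941 — 8 statements merged into one kernel-verified Lean document; each statement's English description precedes it below -/
import Mathlib

section
/- Let L ⊣ R : D ⇄ C be an adjunction with D cartesian, and W an object of D such that the counit of the sliced adjunction L_W ⊣ R_W : D/W ⇄ C/LW is an isomorphism. Suppose that for every object X_φ of C/LW, the unit η^W of the sliced adjunction is an isomorphism at W*Σ_W R_W(X_φ). Then for any object V_f of D/W: η^W at W*V (i.e. at the object π₁ : W×V → W) is an isomorphism if and only if η^W at V_f is an isomorphism. -/
open CategoryTheory Limits

/-!
Since the counit is invertible, `R_W` is fully faithful and `η^W` is invertible exactly on its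
essential image, which, being reflective, is closed under the limits that exist in `D/W`.
The terminal object `id_W` lies in it, and by hypothesis `W*Σ_W` maps it into itself. Every `V_f`
is the pullback of the diagonal `id_W → W*W` along `W*f : W*V → W*W`, so `V_f` lies in the
essential image as soon as `W*V` does.
-/

namespace CategoryTheory

instance Functor.essImage_isClosedUnderLimitsOfShape_of_reflective
    {C D J : Type*} [Category C] [Category D] [Category J] [HasLimitsOfShape J C]
    (R : D ⥤ C) [Reflective R] : R.essImage.IsClosedUnderLimitsOfShape J :=
  have := hasLimitsOfShape_of_reflective (J := J) R
  inferInstance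

lemma Limits.isPullback_graph_diag {C : Type*} [Category C] [HasBinaryProducts C]
    {X Y : C} (f : X ⟶ Y) :
    IsPullback (prod.lift f (𝟙 X)) f (prod.map (𝟙 Y) f) (diag Y) := by
  have cone_eqs (s : PullbackCone (prod.map (𝟙 Y) f) (diag Y)) :
      s.fst ≫ prod.fst = s.snd ∧ s.fst ≫ prod.snd ≫ f = s.snd :=
    ⟨by simpa [prod.lift_fst] using congr($s.condition ≫ prod.fst),
      by simpa [prod.lift_snd] using congr($s.condition ≫ prod.snd)⟩
  refine ⟨⟨by ext <;> simp [prod.lift_fst, prod.lift_snd]⟩,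
    ⟨PullbackCone.IsLimit.mk _ (fun s ↦ s.fst ≫ prod.snd) (fun s ↦ ?_)
      (fun s ↦ by simpa using (cone_eqs s).2) (fun s m hm _ ↦ by simp [← hm, prod.lift_snd])⟩⟩
  obtain ⟨h₁, h₂⟩ := cone_eqs s
  ext <;> simp [prod.lift_fst, prod.lift_snd, h₁, h₂]

namespace Over

variable {D : Type*} [Category D] {W : D}

section BinaryProducts

variable [HasBinaryProducts D]

lemma star_obj_hom_eq_fst (X : D) : ((star W).obj X).hom = prod.fst := by
  simp only [star_obj_hom]
  exact prod.lift_fst _ _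

lemma isPullback_graph_diag (V : Over W) :
    IsPullback
      (homMk (prod.lift V.hom (𝟙 _)) (by rw [star_obj_hom_eq_fst]; exact prod.lift_fst _ _) :
        V ⟶ (star W).obj V.left)
      (homMk V.hom : V ⟶ mk (𝟙 W)) ((star W).map V.hom)
      (homMk (diag W) (by rw [star_obj_hom_eq_fst]; exact prod.lift_fst _ _) :
        mk (𝟙 W) ⟶ (star W).obj W) :=
  have h := Limits.isPullback_graph_diag V.hom
  .of_map (forget W) (OverMorphism.ext h.w) h

end BinaryProducts

theorem mem_essImage_star_obj_iff [HasPullbacks D] [HasBinaryProducts D] {E : Type*} [Category E]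
    (i : E ⥤ Over W) [Reflective i]
    (h : ∀ X : E, i.essImage ((star W).obj (i.obj X).left)) (V : Over W) :
    i.essImage ((star W).obj V.left) ↔ i.essImage V := by
  have star_mem {V : Over W} : i.essImage V → i.essImage ((star W).obj V.left) :=
    fun ⟨X, ⟨e⟩⟩ ↦ (h X).ofIso ((star W).mapIso ((forget W).mapIso e))
  have terminal_mem : i.essImage (mk (𝟙 W)) :=
    i.essImage.prop_of_isLimit mkIdTerminal (fun j ↦ j.as.elim)
  refine ⟨fun hV ↦ i.essImage.prop_of_isLimit (isPullback_graph_diag V).isLimit ?_, star_mem⟩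
  rintro (_ | _ | _)
  exacts [star_mem terminal_mem, hV, terminal_mem]

end Over

end CategoryTheory

theorem stmt4_general {D C : Type*} [Category D] [Category C] [HasFiniteLimits D]
    (L : D ⥤ C) (W : D)
    (RW : Over (L.obj W) ⥤ Over W)
    (adjW : (Over.post L : Over W ⥤ Over (L.obj W)) ⊣ RW)
    (hcounit : IsIso adjW.counit)
    (hunit : ∀ X : Over (L.obj W),
      IsIso (adjW.unit.app ((Over.star W).obj ((Over.forget W).obj (RW.obj X))))) :
    ∀ V : Over W,
      IsIso (adjW.unit.app ((Over.star W).obj V.left)) ↔ IsIso (adjW.unit.app V) := by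
  let hRW := adjW.fullyFaithfulROfIsIsoCounit
  have : Reflective RW := { toFull := hRW.full, toFaithful := hRW.faithful, L := _, adj := adjW }
  simp only [adjW.isIso_unit_app_iff_mem_essImage] at hunit ⊢
  exact Over.mem_essImage_star_obj_iff RW hunit

/-- **technical lemma.** Let `L ⊣ R : D ⇄ C` be an adjunction with `D`
cartesian, and `W` an object of `D` such that the counit of the sliced adjunction
`L_W ⊣ R_W : D/W ⇄ C/LW` (with `L_W = Over.post L` and right adjoint `R_W` given by the
adjunction data `adjW`) is an isomorphism.  Suppose that for every object `X` of `C/LW`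
the unit `η^W` of the sliced adjunction is an isomorphism at `W*Σ_W R_W(X)` (here
`Σ_W = Over.forget W` and `W* = Over.star W`).  Then for any object `V_f` of `D/W`,
`η^W` at `W*V` is an isomorphism iff `η^W` at `V_f` is an isomorphism. -/
theorem stmt4 {D C : Type*} [Category D] [Category C] [HasFiniteLimits D]
    (L : D ⥤ C) (R : C ⥤ D) (adj : L ⊣ R) (W : D)
    (RW : Over (L.obj W) ⥤ Over W)
    (adjW : (Over.post L : Over W ⥤ Over (L.obj W)) ⊣ RW)
    (hcounit : IsIso adjW.counit)
    (hunit : ∀ X : Over (L.obj W),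
      IsIso (adjW.unit.app ((Over.star W).obj ((Over.forget W).obj (RW.obj X))))) :
    ∀ V : Over W,
      IsIso (adjW.unit.app ((Over.star W).obj V.left)) ↔ IsIso (adjW.unit.app V) :=
  stmt4_general L W RW adjW hcounit hunit
end

section
/- Let L ⊣ R : D ⇄ C be an adjunction with D cartesian, W an object of D, and V_f an object of D/W. If the unit η^W of the sliced adjunction L_W ⊣ R_W at the object W*V = (π₁ : W×V → W) is an isomorphism, then the unit η^W at V_f is a split monomorphism in D: the composite W ×_{RLW} RLV → W ×_{RLW} RL(W×V) → V, where the first map is id_W × RL(f,id_V) over RLW and the second is obtained from the inverse of (π₁, η_{W×V}) : W×V → W ×_{RLW} RL(W×V), splits the map (f, η_V) : V → W ×_{RLW} RLV. -/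
open CategoryTheory Limits

/-!
The map `(f, id_V) : V ⟶ W ⨯ V` is a morphism from `V_f` to `W*V` in `D/W`, so naturality of the
sliced unit identifies `(id_W × RL(f, id_V)) ∘ (f, η_V)` with `(π₁, η_{W⨯V}) ∘ (f, id_V)`.
Composing with `j` cancels the second factor, and `π₂ ∘ (f, id_V) = id_V`.
-/

namespace CategoryTheory.Adjunction

variable {D C : Type*} [Category D] [Category C] [HasPullbacks D] {L : D ⥤ C} {R : C ⥤ D}

/-- The unit `(f, η_V) : V ⟶ W ×_{RLW} RLV` at `V_f` of the adjunction sliced over `W`. -/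
noncomputable def sliceUnit (adj : L ⊣ R) {V W : D} (f : V ⟶ W) :
    V ⟶ pullback (R.map (L.map f)) (adj.unit.app W) :=
  pullback.lift (adj.unit.app V) f (by simp)

theorem sliceUnit_naturality (adj : L ⊣ R) {V V' W : D} {f : V ⟶ W} {f' : V' ⟶ W}
    (g : V ⟶ V') (hg : g ≫ f' = f) :
    adj.sliceUnit f ≫
        pullback.map (R.map (L.map f)) (adj.unit.app W) (R.map (L.map f')) (adj.unit.app W)
          (R.map (L.map g)) (𝟙 W) (𝟙 (R.obj (L.obj W)))
          (by simp [← hg]) (by simp) =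
      g ≫ adj.sliceUnit f' := by
  apply pullback.hom_ext
  · simp only [sliceUnit, pullback.map, Category.assoc, pullback.lift_fst, pullback.lift_fst_assoc]
    exact adj.unit_naturality g
  · simp only [sliceUnit, pullback.map, Category.assoc, pullback.lift_snd, pullback.lift_snd_assoc]
    simpa using hg.symm

end CategoryTheory.Adjunction

/-- Let `L ⊣ R : D ⇄ C` be an adjunction with `D` cartesian, `W` an
object of `D` and `f : V ⟶ W` an object `V_f` of `D/W`.  The unit of the sliced
adjunction at `V_f` is the map `(f, η_V) : V ⟶ W ×_{RLW} RLV`, and at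
`W*V = (π₁ : W ⨯ V ⟶ W)` it is `(π₁, η_{W⨯V}) : W ⨯ V ⟶ W ×_{RLW} RL(W ⨯ V)`.
If the latter is an isomorphism (with inverse `j`), then `(f, η_V)` is a split
monomorphism in `D`, split by the composite
`W ×_{RLW} RLV → W ×_{RLW} RL(W ⨯ V) → W ⨯ V → V`, where the first map is
`id_W ×_{RLW} RL(f, id_V)`, the second is `j`, and the third is `π₂`. -/
theorem stmt5 {D C : Type*} [Category D] [Category C] [HasFiniteLimits D]
    (L : D ⥤ C) (R : C ⥤ D) (adj : L ⊣ R) (W V : D) (f : V ⟶ W)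
    (j : pullback (R.map (L.map (prod.fst : W ⨯ V ⟶ W))) (adj.unit.app W) ⟶ W ⨯ V)
    (hj₁ : pullback.lift (adj.unit.app (W ⨯ V)) (prod.fst : W ⨯ V ⟶ W)
        (by simpa using (adj.unit.naturality (prod.fst : W ⨯ V ⟶ W)).symm) ≫ j = 𝟙 (W ⨯ V)) :
    pullback.lift (adj.unit.app V) f (by simpa using (adj.unit.naturality f).symm) ≫
      (pullback.map (R.map (L.map f)) (adj.unit.app W)
          (R.map (L.map (prod.fst : W ⨯ V ⟶ W))) (adj.unit.app W)
          (R.map (L.map (prod.lift f (𝟙 V)))) (𝟙 W) (𝟙 (R.obj (L.obj W)))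
          (by simp [← Functor.map_comp, prod.lift_fst]) (by simp) ≫
        j ≫ (prod.snd : W ⨯ V ⟶ V)) = 𝟙 V := by
  have hunit := adj.sliceUnit_naturality (prod.lift f (𝟙 V)) (prod.lift_fst f (𝟙 V))
  rw [Adjunction.sliceUnit, Adjunction.sliceUnit] at hunit
  rw [← Category.assoc, hunit, Category.assoc, reassoc_of% hj₁]
  exact prod.lift_snd f (𝟙 V)
end

section
/- Let D ⊣ C : A ⇄ P be an adjunction between categories with pullbacks and σ : S → R a morphism of A such that the counit of the adjunction sliced at S is an isomorphism (i.e. D_S C_S ≅ Id on P/DS). Then an object A_a of A/R is σ-split if and only if σ*A_a is isomorphic to C_S X_φ for some object X_φ of P/DS. -/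
open CategoryTheory Limits

lemma unit_iso_of_iso_obj {C D : Type*} [Category C] [Category D]
    {L : C ⥤ D} {Rf : D ⥤ C} (adj : L ⊣ Rf) (hc : IsIso adj.counit)
    {Y : C} {X : D} (e : Y ≅ Rf.obj X) : IsIso (adj.unit.app Y) := by
  have h1 : IsIso (adj.counit.app X) := inferInstance
  have h2 : IsIso (adj.unit.app (Rf.obj X)) := by
    have tri := adj.right_triangle_components X
    have : IsIso (Rf.map (adj.counit.app X)) := inferInstance
    have : IsIso (adj.unit.app (Rf.obj X) ≫ Rf.map (adj.counit.app X)) := by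
      rw [tri]; exact IsIso.id _
    exact IsIso.of_isIso_comp_right _ (Rf.map (adj.counit.app X))
  have nat : e.hom ≫ adj.unit.app (Rf.obj X) =
      adj.unit.app Y ≫ (L ⋙ Rf).map e.hom := by
    have := adj.unit.naturality e.hom
    simp only [Functor.id_map] at this
    exact this
  have : adj.unit.app Y = e.hom ≫ adj.unit.app (Rf.obj X) ≫ inv ((L ⋙ Rf).map e.hom) := by
    rw [← Category.assoc, nat, Category.assoc, IsIso.hom_inv_id, Category.comp_id]
  rw [this]
  infer_instance

/-- Let `F ⊣ U : A ⇄ P` be an adjunction between categories with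
pullbacks and `σ : S ⟶ R` a morphism of `A` such that the counit of the adjunction
sliced at `S` (with left adjoint `F_S = Over.post F` and right adjoint `U_S` given by the
adjunction data `adjS`) is an isomorphism.  Then an object `A_a` of `A/R` is `σ`-split
(the sliced unit is an isomorphism at `σ*A_a`) if and only if `σ*A_a ≅ U_S X_φ` for
some object `X_φ` of `P/FS`. -/
theorem stmt6 {A P : Type*} [Category A] [Category P] [HasPullbacks A] [HasPullbacks P]
    (F : A ⥤ P) (U : P ⥤ A) (adj : F ⊣ U) {S R : A} (σ : S ⟶ R)
    (US : Over (F.obj S) ⥤ Over S)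
    (adjS : (Over.post F : Over S ⥤ Over (F.obj S)) ⊣ US)
    (hcounit : IsIso adjS.counit) :
    ∀ Aa : Over R,
      IsIso (adjS.unit.app ((Over.pullback σ).obj Aa)) ↔
        ∃ X : Over (F.obj S), Nonempty ((Over.pullback σ).obj Aa ≅ US.obj X) := by
  intro Aa
  constructor
  · intro h
    exact ⟨(Over.post F).obj ((Over.pullback σ).obj Aa),
      ⟨asIso (adjS.unit.app ((Over.pullback σ).obj Aa))⟩⟩
  · rintro ⟨X, ⟨e⟩⟩
    exact unit_iso_of_iso_obj adjS hcounit e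
end

section
/- Let D ⊣ C : A ⇄ P be an adjunction between categories with pullbacks and σ : S → R a Galois descent morphism. Then the full subcategory Split_R(σ) of A/R consisting of σ-split objects is closed under finite limits in A/R; in particular Split_R(σ) is a cartesian category. -/
open CategoryTheory Limits

/-!
Since the sliced counit is invertible, `U_S` is fully faithful, and the sliced unit is
invertible exactly on the essential image of `U_S`: a reflective subcategory of `A/S`, hence
closed under all limits. `Split_R(σ)` is the preimage of this subcategory under `σ*`, which
preserves limits as a right adjoint.
-/

lemma CategoryTheory.Adjunction.isClosedUnderLimitsOfShape_isIso_unit_app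
    {C D : Type*} [Category C] [Category D] {L : C ⥤ D} {R : D ⥤ C} (adj : L ⊣ R) [IsIso adj.counit]
    (J : Type*) [Category J] [HasLimitsOfShape J D] :
    ObjectProperty.IsClosedUnderLimitsOfShape
      (fun B : C => IsIso (adj.unit.app B) : ObjectProperty C) J := by
  have := adj.fullyFaithfulROfIsIsoCounit.full
  have := adj.fullyFaithfulROfIsIsoCounit.faithful
  have := adj.rightAdjoint_preservesLimits
  have hR : (fun B : C => IsIso (adj.unit.app B) : ObjectProperty C) = R.essImage := by
    ext B
    exact adj.isIso_unit_app_iff_mem_essImage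
  rw [hR]
  infer_instance

theorem stmt7_general {A P : Type*} [Category A] [Category P] [HasPullbacks A] [HasPullbacks P]
    (F : A ⥤ P) {S R : A} (σ : S ⟶ R)
    (US : Over (F.obj S) ⥤ Over S)
    (adjS : (Over.post F : Over S ⥤ Over (F.obj S)) ⊣ US)
    (hcounit : IsIso adjS.counit) :
    (∀ (J : Type) (_ : SmallCategory J) (_ : FinCategory J),
      ObjectProperty.IsClosedUnderLimitsOfShape
        (fun Aa : Over R => IsIso (adjS.unit.app ((Over.pullback σ).obj Aa)) : ObjectProperty (Over R)) J) ∧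
    HasFiniteLimits
      (ObjectProperty.FullSubcategory
        (fun Aa : Over R => IsIso (adjS.unit.app ((Over.pullback σ).obj Aa)))) := by
  have : HasFiniteLimits (Over R) := hasFiniteLimits_of_hasTerminal_and_pullbacks
  have : HasFiniteLimits (Over (F.obj S)) := hasFiniteLimits_of_hasTerminal_and_pullbacks
  have := (Over.mapPullbackAdj σ).rightAdjoint_preservesLimits.{0, 0}
  have hclosed (J : Type) [SmallCategory J] [FinCategory J] :
      ObjectProperty.IsClosedUnderLimitsOfShape
        (fun Aa : Over R => IsIso (adjS.unit.app ((Over.pullback σ).obj Aa)) : ObjectProperty (Over R)) J :=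
    have := adjS.isClosedUnderLimitsOfShape_isIso_unit_app J
    ObjectProperty.IsClosedUnderLimitsOfShape.inverseImage J (fun B => IsIso (adjS.unit.app B))
      (Over.pullback σ)
  exact ⟨fun J _ _ => hclosed J, ⟨fun J _ _ => have := hclosed J; inferInstance⟩⟩

/-- Let `F ⊣ U : A ⇄ P` be an adjunction between categories with
pullbacks and `σ : S ⟶ R` a Galois descent morphism: (i) `σ* = Over.pullback σ` is
monadic; (ii) the counit of the adjunction sliced at `S` is an isomorphism; (iii) for
every `X` in `P/FS` the sliced unit is an isomorphism at `σ*Σ_σ U_S X`.  Then the full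
subcategory `Split_R(σ)` of `σ`-split objects of `A/R` is closed under finite limits in
`A/R`; in particular `Split_R(σ)` is a cartesian category. -/
theorem stmt7 {A P : Type*} [Category A] [Category P] [HasPullbacks A] [HasPullbacks P]
    (F : A ⥤ P) (U : P ⥤ A) (adj : F ⊣ U) {S R : A} (σ : S ⟶ R)
    (US : Over (F.obj S) ⥤ Over S)
    (adjS : (Over.post F : Over S ⥤ Over (F.obj S)) ⊣ US)
    [MonadicRightAdjoint (Over.pullback σ)]
    (hcounit : IsIso adjS.counit)
    (hsplit : ∀ X : Over (F.obj S),
      IsIso (adjS.unit.app ((Over.pullback σ).obj ((Over.map σ).obj (US.obj X))))) :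
    (∀ (J : Type) (_ : SmallCategory J) (_ : FinCategory J),
      ObjectProperty.IsClosedUnderLimitsOfShape
        (fun Aa : Over R => IsIso (adjS.unit.app ((Over.pullback σ).obj Aa)) : ObjectProperty (Over R)) J) ∧
    HasFiniteLimits
      (ObjectProperty.FullSubcategory
        (fun Aa : Over R => IsIso (adjS.unit.app ((Over.pullback σ).obj Aa)))) :=
  stmt7_general F σ US adjS hcounit
end

section
/- Let D ⊣ C : A ⇄ P be an adjunction between categories with pullbacks and σ : S → R a Galois descent morphism. Then the sliced right adjoint C_R : P/DR → A/R factors through the full subcategory Split_R(σ) ⊆ A/R; that is, for every object Y_ψ of P/DR, the object C_R(Y_ψ) is σ-split. -/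
open CategoryTheory Limits

/-!
Pulling back along `σ` commutes with the sliced right adjoints: both `U_R ⋙ σ*` and
`(Fσ)* ⋙ U_S` are right adjoint to `Σ_σ ⋙ F_R ≅ F_S ⋙ Σ_{Fσ}`, so `σ* (U_R Y) ≅ U_S ((Fσ)* Y)`.
Since the counit of `F_S ⊣ U_S` is an isomorphism, `U_S` is fully faithful, and the unit of
`F_S ⊣ U_S` is an isomorphism at every object of its essential image.
-/

namespace CategoryTheory

variable {A P : Type*} [Category A] [Category P]

namespace Over

def mapCompPostIso (F : A ⥤ P) {S R : A} (σ : S ⟶ R) :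
    Over.map σ ⋙ Over.post F ≅ Over.post F ⋙ Over.map (F.map σ) :=
  NatIso.ofComponents (fun X => Over.isoMk (Iso.refl _) (by simp [Over.post]))
    (fun f => by ext; simp [Over.post])

noncomputable def pullbackCompRightAdjointIso (F : A ⥤ P) {S R : A} (σ : S ⟶ R)
    [HasPullbacksAlong σ] [HasPullbacksAlong (F.map σ)]
    {US : Over (F.obj S) ⥤ Over S} (adjS : Over.post F ⊣ US)
    {UR : Over (F.obj R) ⥤ Over R} (adjR : Over.post F ⊣ UR) :
    UR ⋙ Over.pullback σ ≅ Over.pullback (F.map σ) ⋙ US :=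
  ((Over.mapPullbackAdj σ).comp adjR).rightAdjointUniq
    ((adjS.comp (Over.mapPullbackAdj (F.map σ))).ofNatIsoLeft (mapCompPostIso F σ).symm)

end Over

end CategoryTheory

theorem stmt8_general {A P : Type*} [Category A] [Category P] [HasPullbacks A] [HasPullbacks P]
    (F : A ⥤ P) {S R : A} (σ : S ⟶ R)
    (US : Over (F.obj S) ⥤ Over S)
    (adjS : (Over.post F : Over S ⥤ Over (F.obj S)) ⊣ US)
    (UR : Over (F.obj R) ⥤ Over R)
    (adjR : (Over.post F : Over R ⥤ Over (F.obj R)) ⊣ UR)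
    (hcounit : IsIso adjS.counit) :
    ∀ Y : Over (F.obj R),
      IsIso (adjS.unit.app ((Over.pullback σ).obj (UR.obj Y))) := by
  intro Y
  have hUS := adjS.fullyFaithfulROfIsIsoCounit
  have := hUS.full
  have := hUS.faithful
  exact adjS.isIso_unit_app_of_iso ((Over.pullbackCompRightAdjointIso F σ adjS adjR).app Y)

/-- Let `F ⊣ U : A ⇄ P` be an adjunction between categories with
pullbacks and `σ : S ⟶ R` a Galois descent morphism (σ* monadic; counit sliced at `S`
an isomorphism; every `Σ_σ U_S X` is `σ`-split).  Then the sliced right adjoint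
`U_R : P/FR ⥤ A/R` factors through `Split_R(σ)`: for every object `Y` of `P/FR`, the
object `U_R(Y)` is `σ`-split. -/
theorem stmt8 {A P : Type*} [Category A] [Category P] [HasPullbacks A] [HasPullbacks P]
    (F : A ⥤ P) (U : P ⥤ A) (adj : F ⊣ U) {S R : A} (σ : S ⟶ R)
    (US : Over (F.obj S) ⥤ Over S)
    (adjS : (Over.post F : Over S ⥤ Over (F.obj S)) ⊣ US)
    (UR : Over (F.obj R) ⥤ Over R)
    (adjR : (Over.post F : Over R ⥤ Over (F.obj R)) ⊣ UR)
    [MonadicRightAdjoint (Over.pullback σ)]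
    (hcounit : IsIso adjS.counit)
    (hsplit : ∀ X : Over (F.obj S),
      IsIso (adjS.unit.app ((Over.pullback σ).obj ((Over.map σ).obj (US.obj X))))) :
    ∀ Y : Over (F.obj R),
      IsIso (adjS.unit.app ((Over.pullback σ).obj (UR.obj Y))) :=
  stmt8_general F σ US adjS UR adjR hcounit
end

section
/- Let D ⊣ C : A ⇄ P be an adjunction between categories with pullbacks and σ : S → R a Galois descent morphism. Then the slice category Split_R(σ)/S_σ is equivalent to the full subcategory of A/S on those objects B_b such that the unit of the sliced adjunction D_S ⊣ C_S is an isomorphism at B_b, and hence Split_R(σ)/S_σ is equivalent to P/DS. -/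
/-!
Let `T = Over.map σ ⋙ Over.pullback σ` and let `η` be the unit of `D_S ⊣ C_S`. Since `C_S` is
fully faithful, `η_B` is invertible as soon as it is a split monomorphism, and therefore the
objects at which `η` is invertible are closed under equalizers. Every `B` over `S` is the
equalizer of `η^T_{T B}, T η^T_B : T B ⇉ T² B`, a fork that becomes split in `A` through the first
pullback projections. As `η` is invertible at every `T (C_S X)`, it is invertible at `T² B`
whenever it is at `T B`; hence `η_B` is invertible iff `Σ_σ B` is `σ`-split. Through
`A/R/S_σ ≌ A/S` this identifies `Split_R(σ)/S_σ` with the objects at which `η` is invertible,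
i.e. with the essential image of `C_S`.
-/

open CategoryTheory Limits

namespace CategoryTheory.Adjunction

variable {C D : Type*} [Category C] [Category D] {L : C ⥤ D} {R : D ⥤ C} (adj : L ⊣ R)
  [R.Full] [R.Faithful]

theorem isIso_unit_app_of_isSplitMono {X : C} [IsSplitMono (adj.unit.app X)] :
    IsIso (adj.unit.app X) := by
  have : IsSplitEpi (R.map (L.map (retraction (adj.unit.app X)))) :=
    IsSplitEpi.mk' ⟨R.map (L.map (adj.unit.app X)), by simp [← Functor.map_comp]⟩
  have : Epi (retraction (adj.unit.app X) ≫ adj.unit.app X) := by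
    rw [show retraction (adj.unit.app X) ≫ adj.unit.app X = _ from
      adj.unit.naturality (retraction (adj.unit.app X))]
    dsimp only [Functor.comp_obj, Functor.comp_map]
    infer_instance
  have : Epi (adj.unit.app X) := epi_of_epi (retraction (adj.unit.app X)) _
  exact isIso_of_epi_of_isSplitMono _

theorem isIso_unit_app_of_isLimit_fork {B X Y : C} {f g : X ⟶ Y} {ι : B ⟶ X}
    (w : ι ≫ f = ι ≫ g) (hι : IsLimit (Fork.ofι ι w))
    [IsIso (adj.unit.app X)] [IsIso (adj.unit.app Y)] : IsIso (adj.unit.app B) := by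
  have inv_unit_naturality {X Y : C} (h : X ⟶ Y) [IsIso (adj.unit.app X)]
      [IsIso (adj.unit.app Y)] :
      inv (adj.unit.app X) ≫ h = R.map (L.map h) ≫ inv (adj.unit.app Y) := by
    rw [IsIso.inv_comp_eq, ← Category.assoc, IsIso.eq_comp_inv]
    exact (adj.unit_naturality h).symm
  obtain ⟨ℓ, hℓ⟩ := Fork.IsLimit.lift' hι (R.map (L.map ι) ≫ inv (adj.unit.app X)) (by
    simp only [Category.assoc, inv_unit_naturality, ← Functor.map_comp_assoc, ← L.map_comp, w])
  have : IsSplitMono (adj.unit.app B) := IsSplitMono.mk' ⟨ℓ, Fork.IsLimit.hom_ext hι (by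
    simp only [Fork.ι_ofι, Category.assoc] at hℓ ⊢
    rw [hℓ, adj.unit_naturality_assoc ι, IsIso.hom_inv_id, Category.comp_id, Category.id_comp])⟩
  exact adj.isIso_unit_app_of_isSplitMono

end CategoryTheory.Adjunction

namespace CategoryTheory.Over

variable {A : Type*} [Category A] [HasPullbacks A] {S R : A} (σ : S ⟶ R) (B : Over S)

theorem mapPullbackAdj_unit_fork_condition :
    (mapPullbackAdj σ).unit.app B ≫ (map σ ⋙ pullback σ).map ((mapPullbackAdj σ).unit.app B) =
      (mapPullbackAdj σ).unit.app B ≫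
        (mapPullbackAdj σ).unit.app ((map σ ⋙ pullback σ).obj B) :=
  ((mapPullbackAdj σ).unit.naturality _).symm

noncomputable def forgetMapPullbackAdjUnitIsSplitEqualizer :
    IsSplitEqualizer
      ((forget S).map ((map σ ⋙ pullback σ).map ((mapPullbackAdj σ).unit.app B)))
      ((forget S).map ((mapPullbackAdj σ).unit.app ((map σ ⋙ pullback σ).obj B)))
      ((forget S).map ((mapPullbackAdj σ).unit.app B)) where
  leftRetraction := Limits.pullback.fst _ _
  rightRetraction := Limits.pullback.fst _ _
  condition := by simp only [← Functor.map_comp, mapPullbackAdj_unit_fork_condition]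
  ι_leftRetraction := Limits.pullback.lift_fst _ _ _
  bottom_rightRetraction := Limits.pullback.lift_fst _ _ _
  top_rightRetraction := Limits.pullback.lift_fst _ _ _

noncomputable def isLimitMapPullbackAdjUnitFork :
    IsLimit (Fork.ofι _ (mapPullbackAdj_unit_fork_condition σ B)) :=
  isLimitOfIsLimitForkMap (forget S) _ (forgetMapPullbackAdjUnitIsSplitEqualizer σ B).isEqualizer

end CategoryTheory.Over

namespace CategoryTheory

noncomputable def ObjectProperty.liftEquivalence {C D : Type*} [Category C] [Category D]
    (Q : ObjectProperty D) (G : C ⥤ D) [G.Full] [G.Faithful] (hG : ∀ X, Q (G.obj X))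
    (hQ : ∀ Y, Q Y → G.essImage Y) : C ≌ Q.FullSubcategory :=
  have : (Q.lift G hG).Full := Functor.Full.of_comp_faithful _ Q.ι
  have : (Q.lift G hG).Faithful := Functor.Faithful.of_comp _ Q.ι
  have : (Q.lift G hG).EssSurj := ⟨fun Y => by
    obtain ⟨X, ⟨e⟩⟩ := hQ Y.obj Y.property
    exact ⟨X, ⟨Q.isoMk e⟩⟩⟩
  have : (Q.lift G hG).IsEquivalence := { }
  (Q.lift G hG).asEquivalence

section SplitObjects

variable {A D : Type*} [Category A] [Category D] [HasPullbacks A] {S R : A} (σ : S ⟶ R)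
  {L : Over S ⥤ D} {Us : D ⥤ Over S} (adj : L ⊣ Us) [Us.Full] [Us.Faithful]

theorem isIso_unit_app_pullback_map_iff
    (hsplit : ∀ X : D,
      IsIso (adj.unit.app ((Over.pullback σ).obj ((Over.map σ).obj (Us.obj X)))))
    (B : Over S) :
    IsIso (adj.unit.app ((Over.pullback σ).obj ((Over.map σ).obj B))) ↔
      IsIso (adj.unit.app B) := by
  have isIso_unit_app_T_of_isIso {B : Over S} (hB : IsIso (adj.unit.app B)) :
      IsIso (adj.unit.app ((Over.map σ ⋙ Over.pullback σ).obj B)) :=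
    (NatTrans.isIso_app_iff_of_iso _
      ((Over.map σ ⋙ Over.pullback σ).mapIso (asIso (adj.unit.app B)))).mpr (hsplit _)
  refine ⟨fun hTB => ?_, isIso_unit_app_T_of_isIso⟩
  have : IsIso (adj.unit.app ((Over.map σ ⋙ Over.pullback σ).obj B)) := hTB
  have : IsIso (adj.unit.app
      ((Over.map σ ⋙ Over.pullback σ).obj ((Over.map σ ⋙ Over.pullback σ).obj B))) :=
    isIso_unit_app_T_of_isIso hTB
  exact adj.isIso_unit_app_of_isLimit_fork _ (Over.isLimitMapPullbackAdjUnitFork σ B)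

noncomputable def overSplitEquivalence
    (hsplit : ∀ X : D,
      IsIso (adj.unit.app ((Over.pullback σ).obj ((Over.map σ).obj (Us.obj X)))))
    (h : IsIso (adj.unit.app ((Over.pullback σ).obj (Over.mk σ)))) :
    Over (⟨Over.mk σ, h⟩ : ObjectProperty.FullSubcategory
        (fun Aa : Over R => IsIso (adj.unit.app ((Over.pullback σ).obj Aa)))) ≌
      ObjectProperty.FullSubcategory (fun B : Over S => IsIso (adj.unit.app B)) :=
  ObjectProperty.liftEquivalence _
    (Over.post (ObjectProperty.ι _) ⋙ (Over.iteratedSliceEquiv (Over.mk σ)).functor)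
    (fun Z => by
      refine (isIso_unit_app_pullback_map_iff σ adj hsplit _).mp ?_
      refine (NatTrans.isIso_app_iff_of_iso _ ((Over.pullback σ).mapIso ?_)).mp Z.left.property
      exact Over.isoMk (Iso.refl _) ((Category.id_comp _).trans (Over.w Z.hom.hom)))
    (fun B hB => ⟨Over.mk (ObjectProperty.homMk (Over.homMk B.hom) :
        (⟨(Over.map σ).obj B, (isIso_unit_app_pullback_map_iff σ adj hsplit B).mpr hB⟩ :
          ObjectProperty.FullSubcategory _) ⟶ ⟨Over.mk σ, h⟩),
      ⟨Over.isoMk (Iso.refl _) (Category.id_comp _)⟩⟩)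

end SplitObjects

end CategoryTheory

theorem stmt11_general {A P : Type*} [Category A] [Category P] [HasPullbacks A]
    (F : A ⥤ P) {S R : A} (σ : S ⟶ R)
    (US : Over (F.obj S) ⥤ Over S)
    (adjS : (Over.post F : Over S ⥤ Over (F.obj S)) ⊣ US)
    (hcounit : IsIso adjS.counit)
    (hsplit : ∀ X : Over (F.obj S),
      IsIso (adjS.unit.app ((Over.pullback σ).obj ((Over.map σ).obj (US.obj X))))) :
    ∃ h : IsIso (adjS.unit.app ((Over.pullback σ).obj (Over.mk σ))),
      Nonempty
        (Over (⟨Over.mk σ, h⟩ :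
            ObjectProperty.FullSubcategory
              (fun Aa : Over R => IsIso (adjS.unit.app ((Over.pullback σ).obj Aa)))) ≌
          ObjectProperty.FullSubcategory (fun Bb : Over S => IsIso (adjS.unit.app Bb))) ∧
      Nonempty
        (Over (⟨Over.mk σ, h⟩ :
            ObjectProperty.FullSubcategory
              (fun Aa : Over R => IsIso (adjS.unit.app ((Over.pullback σ).obj Aa)))) ≌
          Over (F.obj S)) := by
  have := adjS.fullyFaithfulROfIsIsoCounit.full
  have := adjS.fullyFaithfulROfIsIsoCounit.faithful
  have : IsSplitMono (adjS.unit.app (Over.mk (𝟙 S))) :=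
    IsSplitMono.mk' ⟨Over.mkIdTerminal.from _, Over.mkIdTerminal.hom_ext _ _⟩
  have h : IsIso (adjS.unit.app ((Over.pullback σ).obj (Over.mk σ))) :=
    (NatTrans.isIso_app_iff_of_iso _ ((Over.pullback σ).mapIso
      (Over.isoMk (Iso.refl _) (by simp) : (Over.map σ).obj (Over.mk (𝟙 S)) ≅ Over.mk σ))).mp
      ((isIso_unit_app_pullback_map_iff σ adjS hsplit _).mpr adjS.isIso_unit_app_of_isSplitMono)
  let E := overSplitEquivalence σ adjS hsplit h
  refine ⟨h, ⟨E⟩, ⟨E.trans (ObjectProperty.liftEquivalence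
    (fun B : Over S => IsIso (adjS.unit.app B)) US (fun _ => inferInstance)
    (fun B _ => adjS.mem_essImage_of_unit_isIso B)).symm⟩⟩

/-- Let `F ⊣ U : A ⇄ P` be an adjunction between categories with
pullbacks and `σ : S ⟶ R` a Galois descent morphism.  Then the slice category
`Split_R(σ)/S_σ` is equivalent to the full subcategory of `A/S` on those objects `B_b`
at which the unit of the sliced adjunction `F_S ⊣ U_S` is an isomorphism, and hence
`Split_R(σ)/S_σ` is equivalent to `P/FS`. -/
theorem stmt11 {A P : Type*} [Category A] [Category P] [HasPullbacks A] [HasPullbacks P]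
    (F : A ⥤ P) (U : P ⥤ A) (adj : F ⊣ U) {S R : A} (σ : S ⟶ R)
    (US : Over (F.obj S) ⥤ Over S)
    (adjS : (Over.post F : Over S ⥤ Over (F.obj S)) ⊣ US)
    [MonadicRightAdjoint (Over.pullback σ)]
    (hcounit : IsIso adjS.counit)
    (hsplit : ∀ X : Over (F.obj S),
      IsIso (adjS.unit.app ((Over.pullback σ).obj ((Over.map σ).obj (US.obj X))))) :
    ∃ h : IsIso (adjS.unit.app ((Over.pullback σ).obj (Over.mk σ))),
      Nonempty
        (Over (⟨Over.mk σ, h⟩ :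
            ObjectProperty.FullSubcategory
              (fun Aa : Over R => IsIso (adjS.unit.app ((Over.pullback σ).obj Aa)))) ≌
          ObjectProperty.FullSubcategory (fun Bb : Over S => IsIso (adjS.unit.app Bb))) ∧
      Nonempty
        (Over (⟨Over.mk σ, h⟩ :
            ObjectProperty.FullSubcategory
              (fun Aa : Over R => IsIso (adjS.unit.app ((Over.pullback σ).obj Aa)))) ≌
          Over (F.obj S)) :=
  stmt11_general F σ US adjS hcounit hsplit
end

section
/- Let D ⊣ C : A ⇄ P be an adjunction between categories with pullbacks and σ : S → R a Galois descent morphism. Then the pullback functor (S_σ)* : Split_R(σ) → Split_R(σ)/S_σ is monadic; i.e. !: S_σ → 1 is an effective descent morphism in Split_R(σ). -/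
/-!
An object `X` over `R` is split when the unit of `Over.post F ⊣ US` is invertible at `σ^* X`.
Naturality of the unit makes split objects closed under isomorphisms, and under every colimit
that is preserved by `σ^*` and then by `US ∘ Over.post F`; coequalizers of `σ^*`-split pairs are
such colimits, since `σ^*` is monadic and split coequalizers are absolute. The hypothesis on the
objects `Σ_σ (US Y)` shows that `S_σ` (the image of the terminal object) and every `Σ_σ σ^* X`
with `X` split are split, so `Σ_σ ⊣ σ^*` restricts to `Σ_{S_σ} ⊣ (S_σ)^*` once
`Split_R(σ)/S_σ` is identified with a full subcategory of `Over S` through the iterated slice.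
Beck's theorem for `(S_σ)^*` is then inherited from `σ^*`: isomorphisms are reflected because
`σ^*` reflects them, and coequalizers of split pairs are created by `σ^*` and are again split.
-/

open CategoryTheory Limits

namespace CategoryTheory

section

variable {C : Type*} [Category C]

def IsSplitCoequalizer.ofIsoPair {X Y Z X' Y' : C} {f g : X ⟶ Y} {π : Y ⟶ Z}
    {f' g' : X' ⟶ Y'} (q : IsSplitCoequalizer f g π) (a : X ≅ X') (b : Y ≅ Y')
    (hf : f ≫ b.hom = a.hom ≫ f') (hg : g ≫ b.hom = a.hom ≫ g') :
    IsSplitCoequalizer f' g' (b.inv ≫ π) where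
  rightSection := q.rightSection ≫ b.hom
  leftSection := b.inv ≫ q.leftSection ≫ a.hom
  condition := by
    rw [← cancel_epi a.hom, reassoc_of% hf.symm, reassoc_of% hg.symm]
    simp [q.condition]
  rightSection_π := by simp [q.rightSection_π]
  leftSection_bottom := by simp [← hg, reassoc_of% q.leftSection_bottom]
  leftSection_top := by simp [← hf, reassoc_of% q.leftSection_top]

theorem HasSplitCoequalizer.of_iso {X Y X' Y' : C} {f g : X ⟶ Y} {f' g' : X' ⟶ Y'}
    [HasSplitCoequalizer f g] (a : X ≅ X') (b : Y ≅ Y')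
    (hf : f ≫ b.hom = a.hom ≫ f') (hg : g ≫ b.hom = a.hom ≫ g') :
    HasSplitCoequalizer f' g' :=
  ⟨⟨_, _, ⟨(HasSplitCoequalizer.isSplitCoequalizer f g).ofIsoPair a b hf hg⟩⟩⟩

theorem Functor.IsSplitPair.of_iso {D : Type*} [Category D] {F G : C ⥤ D} (e : F ≅ G)
    {X Y : C} {f g : X ⟶ Y} [F.IsSplitPair f g] : G.IsSplitPair f g :=
  HasSplitCoequalizer.of_iso (e.app X) (e.app Y) (e.hom.naturality f) (e.hom.naturality g)

theorem Limits.preservesColimit_of_hasSplitCoequalizer {D : Type*} [Category D]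
    (K : WalkingParallelPair ⥤ C) [HasSplitCoequalizer (K.map .left) (K.map .right)]
    (T : C ⥤ D) :
    PreservesColimit K T :=
  preservesColimit_of_iso_diagram T (diagramIsoParallelPair K).symm

theorem NatTrans.isIso_app_of_isColimit {J D : Type*} [Category J] [Category D] {K : J ⥤ C}
    {F G : C ⥤ D} (α : F ⟶ G) [PreservesColimit K F] [PreservesColimit K G]
    [∀ j, IsIso (α.app (K.obj j))] {c : Cocone K} (hc : IsColimit c) : IsIso (α.app c.pt) := by
  have : IsIso (Functor.whiskerLeft K α) :=
    @NatIso.isIso_of_isIso_app _ _ _ _ _ _ _ fun j => inferInstanceAs (IsIso (α.app (K.obj j)))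
  have hα : α.app c.pt = (IsColimit.coconePointsIsoOfNatIso (isColimitOfPreserves F hc)
      (isColimitOfPreserves G hc) (asIso (Functor.whiskerLeft K α))).hom := by
    refine (isColimitOfPreserves F hc).hom_ext fun j => ?_
    rw [IsColimit.comp_coconePointsIsoOfNatIso_hom]
    exact α.naturality (c.ι.app j)
  rw [hα]
  infer_instance

end

namespace Monad

universe v
variable {C D C₀ : Type*} [Category.{v} C] [Category.{v} D] [Category.{v} C₀]

instance reflectsIsomorphisms_of_monadicRightAdjoint (G : D ⥤ C) [MonadicRightAdjoint G] :
    G.ReflectsIsomorphisms :=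
  reflectsIsomorphisms_of_iso (comparisonForget (monadicAdjunction G))

theorem hasColimit_and_preservesColimit_of_isSplitPair (G : D ⥤ C) [MonadicRightAdjoint G]
    (K : WalkingParallelPair ⥤ D) [G.IsSplitPair (K.map .left) (K.map .right)] :
    HasColimit K ∧ PreservesColimit K G := by
  have := createsGSplitCoequalizersOfMonadic G (K.map .left) (K.map .right)
  have : CreatesColimit K G := createsColimitOfIsoDiagram G (diagramIsoParallelPair K).symm
  have : HasCoequalizer ((K ⋙ G).map .left) ((K ⋙ G).map .right) :=
    inferInstanceAs (HasCoequalizer (G.map (K.map .left)) (G.map (K.map .right)))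
  have : HasColimit (K ⋙ G) := hasColimit_of_iso (diagramIsoParallelPair (K ⋙ G))
  exact ⟨hasColimit_of_created K G, inferInstance⟩

section Restriction

variable {G : D ⥤ C} {P : ObjectProperty D} {G₀ : P.FullSubcategory ⥤ C₀} {j : C₀ ⥤ C}

theorem isSplitPair_hom_of_isSplitPair (e : P.ι ⋙ G ≅ G₀ ⋙ j) {X Y : P.FullSubcategory}
    (f g : X ⟶ Y) [G₀.IsSplitPair f g] : G.IsSplitPair f.hom g.hom :=
  have : (G₀ ⋙ j).IsSplitPair f g :=
    inferInstanceAs (HasSplitCoequalizer (j.map (G₀.map f)) (j.map (G₀.map g)))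
  Functor.IsSplitPair.of_iso e.symm

theorem hasColimit_and_preservesColimit_of_restriction [MonadicRightAdjoint G] [j.Full] [j.Faithful]
    (e : P.ι ⋙ G ≅ G₀ ⋙ j)
    (hP : ∀ {X Y : P.FullSubcategory} (f g : X ⟶ Y), G.IsSplitPair f.hom g.hom →
      ∀ c : Cocone (parallelPair f g ⋙ P.ι), IsColimit c → P c.pt)
    {X Y : P.FullSubcategory} (f g : X ⟶ Y) [G₀.IsSplitPair f g] :
    HasCoequalizer f g ∧ PreservesColimit (parallelPair f g) G₀ := by
  let K := parallelPair f g ⋙ P.ι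
  have hsplit := isSplitPair_hom_of_isSplitPair e f g
  have : G.IsSplitPair (K.map .left) (K.map .right) := hsplit
  obtain ⟨_, _⟩ := hasColimit_and_preservesColimit_of_isSplitPair G K
  have : CreatesColimit (parallelPair f g) P.ι := createsColimitFullSubcategoryInclusion' _
    (colimit.isColimit _) (hP f g hsplit _ (colimit.isColimit _))
  have : HasCoequalizer f g := hasColimit_of_created _ P.ι
  have : PreservesColimit (parallelPair f g) (G₀ ⋙ j) := preservesColimit_of_natIso _ e
  have : ReflectsColimitsOfSize j := fullyFaithful_reflectsColimits j
  exact ⟨inferInstance, preservesColimit_of_reflects_of_preserves G₀ j⟩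

noncomputable def monadicOfRestriction [MonadicRightAdjoint G] [j.Full] [j.Faithful]
    {F₀ : C₀ ⥤ P.FullSubcategory} (adj₀ : F₀ ⊣ G₀) (e : P.ι ⋙ G ≅ G₀ ⋙ j)
    (hP : ∀ {X Y : P.FullSubcategory} (f g : X ⟶ Y), G.IsSplitPair f.hom g.hom →
      ∀ c : Cocone (parallelPair f g ⋙ P.ι), IsColimit c → P c.pt) :
    MonadicRightAdjoint G₀ :=
  have : (G₀ ⋙ j).ReflectsIsomorphisms := reflectsIsomorphisms_of_iso e
  have : G₀.ReflectsIsomorphisms := reflectsIsomorphisms_of_comp G₀ j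
  have : HasCoequalizerOfIsSplitPair G₀ :=
    ⟨fun f g _ => (hasColimit_and_preservesColimit_of_restriction e hP f g).1⟩
  have : PreservesColimitOfIsSplitPair G₀ :=
    ⟨fun f g _ => (hasColimit_and_preservesColimit_of_restriction e hP f g).2⟩
  monadicOfHasPreservesGSplitCoequalizersOfReflectsIsomorphisms adj₀

end Restriction

end Monad
end CategoryTheory

namespace CategoryTheory.Over

variable {A : Type*} [Category A] [HasPullbacks A] {S R : A} (σ : S ⟶ R)
  {Q : Type*} [Category Q] {L : Over S ⥤ Q} {U : Q ⥤ Over S} (adj : L ⊣ U)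

abbrev splitObjects : ObjectProperty (Over R) :=
  fun X => IsIso (adj.unit.app ((pullback σ).obj X))

abbrev Split : Type _ := (splitObjects σ adj).FullSubcategory

instance : (splitObjects σ adj).IsClosedUnderIsomorphisms :=
  ⟨fun e h => (NatTrans.isIso_app_iff_of_iso adj.unit ((pullback σ).mapIso e)).1 h⟩

variable {σ adj}

theorem splitObjects_of_isColimit {J : Type*} [Category J] {K : J ⥤ Over R}
    [PreservesColimit K (pullback σ)] [PreservesColimit (K ⋙ pullback σ) (L ⋙ U)]
    (hK : ∀ j, splitObjects σ adj (K.obj j)) {c : Cocone K} (hc : IsColimit c) :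
    splitObjects σ adj c.pt :=
  have : ∀ j, IsIso (adj.unit.app ((K ⋙ pullback σ).obj j)) := hK
  NatTrans.isIso_app_of_isColimit adj.unit (isColimitOfPreserves (pullback σ) hc)

theorem splitObjects_of_isColimit_of_isSplitPair [MonadicRightAdjoint (pullback σ)]
    {X Y : Split σ adj} (f g : X ⟶ Y) (hfg : (pullback σ).IsSplitPair f.hom g.hom)
    (c : Cocone (parallelPair f g ⋙ (splitObjects σ adj).ι)) (hc : IsColimit c) :
    splitObjects σ adj c.pt := by
  let K := parallelPair f g ⋙ (splitObjects σ adj).ι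
  have : (pullback σ).IsSplitPair (K.map .left) (K.map .right) := hfg
  have := (Monad.hasColimit_and_preservesColimit_of_isSplitPair (pullback σ) K).2
  have : HasSplitCoequalizer ((K ⋙ pullback σ).map .left) ((K ⋙ pullback σ).map .right) := hfg
  have := preservesColimit_of_hasSplitCoequalizer (K ⋙ pullback σ) (L ⋙ U)
  refine splitObjects_of_isColimit ?_ hc
  rintro (_ | _)
  exacts [X.property, Y.property]

theorem splitObjects_map_pullback (hsplit : ∀ X : Q, splitObjects σ adj ((map σ).obj (U.obj X)))
    {X : Over R} (hX : splitObjects σ adj X) :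
    splitObjects σ adj ((map σ).obj ((pullback σ).obj X)) :=
  have : IsIso (adj.unit.app ((pullback σ).obj X)) := hX
  (splitObjects σ adj).prop_of_iso
    ((map σ).mapIso (asIso (adj.unit.app ((pullback σ).obj X))).symm) (hsplit _)

theorem splitObjects_mk [HasTerminal Q]
    (hsplit : ∀ X : Q, splitObjects σ adj ((map σ).obj (U.obj X))) :
    splitObjects σ adj (Over.mk σ) := by
  have : PreservesLimitsOfShape (Discrete PEmpty) U :=
    adj.rightAdjoint_preservesLimits.preservesLimitsOfShape
  have e : (map σ).obj (U.obj (⊤_ Q)) ≅ Over.mk σ :=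
    (map σ).mapIso
      ((IsTerminal.isTerminalObj U _ terminalIsTerminal).uniqueUpToIso mkIdTerminal) ≪≫
        isoMk (Iso.refl _)
  exact (splitObjects σ adj).prop_of_iso e (hsplit _)

section Slice

-- In the notation of the paper, `Split σ adj` is `Split_R(σ)`, `splitSelf` is `S_σ` and
-- `splitPullback` is `(S_σ)^*`.
variable [HasTerminal Q] (hsplit : ∀ X : Q, splitObjects σ adj ((map σ).obj (U.obj X)))

abbrev splitSelf : Split σ adj := ⟨Over.mk σ, splitObjects_mk hsplit⟩

-- Its essential image consists of the `Z` over `S` with `Σ_σ Z` split.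
abbrev sliceToOver : Over (splitSelf hsplit) ⥤ Over S :=
  post (splitObjects σ adj).ι ⋙ (iteratedSliceEquiv (Over.mk σ)).functor

theorem mem_essImage_sliceToOver {Z : Over S} (hZ : splitObjects σ adj ((map σ).obj Z)) :
    (sliceToOver hsplit).essImage Z :=
  ⟨Over.mk (ObjectProperty.homMk (Over.homMk Z.hom) :
      (⟨(map σ).obj Z, hZ⟩ : Split σ adj) ⟶ splitSelf hsplit),
    ⟨(iteratedSliceEquiv (Over.mk σ)).counitIso.app Z⟩⟩

noncomputable def splitPullback : Split σ adj ⥤ Over (splitSelf hsplit) :=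
  Functor.essImage.liftFunctor ((splitObjects σ adj).ι ⋙ pullback σ) (sliceToOver hsplit)
    fun X => mem_essImage_sliceToOver hsplit (splitObjects_map_pullback hsplit X.property)

noncomputable def sliceToOverCompMapIso :
    sliceToOver hsplit ⋙ map σ ≅ Over.forget (splitSelf hsplit) ⋙ (splitObjects σ adj).ι :=
  NatIso.ofComponents
    (fun B => isoMk (Iso.refl _) ((Category.id_comp _).trans (Over.w B.hom.hom).symm))
    fun _ => by ext; exact (Category.comp_id _).trans (Category.id_comp _).symm

noncomputable def forgetAdjSplitPullback :
    Over.forget (splitSelf hsplit) ⊣ splitPullback hsplit :=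
  (mapPullbackAdj σ).restrictFullyFaithful (.ofFullyFaithful (sliceToOver hsplit))
    (.ofFullyFaithful (splitObjects σ adj).ι) (sliceToOverCompMapIso hsplit)
    (Functor.essImage.liftFunctorCompIso _ _ _).symm

noncomputable def monadicSplitPullback [MonadicRightAdjoint (pullback σ)] :
    MonadicRightAdjoint (splitPullback hsplit) :=
  Monad.monadicOfRestriction (forgetAdjSplitPullback hsplit)
    (Functor.essImage.liftFunctorCompIso _ _ _).symm splitObjects_of_isColimit_of_isSplitPair

end Slice

end CategoryTheory.Over

theorem stmt12_general {A P : Type*} [Category A] [Category P] [HasPullbacks A]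
    (F : A ⥤ P) {S R : A} (σ : S ⟶ R)
    (US : Over (F.obj S) ⥤ Over S)
    (adjS : (Over.post F : Over S ⥤ Over (F.obj S)) ⊣ US)
    [MonadicRightAdjoint (Over.pullback σ)]
    (hsplit : ∀ X : Over (F.obj S),
      IsIso (adjS.unit.app ((Over.pullback σ).obj ((Over.map σ).obj (US.obj X))))) :
    ∃ h : IsIso (adjS.unit.app ((Over.pullback σ).obj (Over.mk σ))),
      ∃ (st : ObjectProperty.FullSubcategory
            (fun Aa : Over R => IsIso (adjS.unit.app ((Over.pullback σ).obj Aa))) ⥤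
          Over (⟨Over.mk σ, h⟩ :
            ObjectProperty.FullSubcategory
              (fun Aa : Over R => IsIso (adjS.unit.app ((Over.pullback σ).obj Aa)))))
        (_ : Over.forget (⟨Over.mk σ, h⟩ :
            ObjectProperty.FullSubcategory
              (fun Aa : Over R => IsIso (adjS.unit.app ((Over.pullback σ).obj Aa)))) ⊣ st),
        Nonempty (MonadicRightAdjoint st) :=
  ⟨Over.splitObjects_mk hsplit, Over.splitPullback hsplit, Over.forgetAdjSplitPullback hsplit,
    ⟨Over.monadicSplitPullback hsplit⟩⟩

/-- Let `F ⊣ U : A ⇄ P` be an adjunction between categories with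
pullbacks and `σ : S ⟶ R` a Galois descent morphism.  Then `S_σ ∈ Split_R(σ)` and the
functor `(S_σ)* : Split_R(σ) ⥤ Split_R(σ)/S_σ` (the right adjoint of the domain functor
`Σ_{S_σ} = Over.forget`) exists and is monadic; i.e. `! : S_σ ⟶ 1` is an effective
descent morphism in `Split_R(σ)`. -/
theorem stmt12 {A P : Type*} [Category A] [Category P] [HasPullbacks A] [HasPullbacks P]
    (F : A ⥤ P) (U : P ⥤ A) (adj : F ⊣ U) {S R : A} (σ : S ⟶ R)
    (US : Over (F.obj S) ⥤ Over S)
    (adjS : (Over.post F : Over S ⥤ Over (F.obj S)) ⊣ US)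
    [MonadicRightAdjoint (Over.pullback σ)]
    (hcounit : IsIso adjS.counit)
    (hsplit : ∀ X : Over (F.obj S),
      IsIso (adjS.unit.app ((Over.pullback σ).obj ((Over.map σ).obj (US.obj X))))) :
    ∃ h : IsIso (adjS.unit.app ((Over.pullback σ).obj (Over.mk σ))),
      ∃ (st : ObjectProperty.FullSubcategory
            (fun Aa : Over R => IsIso (adjS.unit.app ((Over.pullback σ).obj Aa))) ⥤
          Over (⟨Over.mk σ, h⟩ :
            ObjectProperty.FullSubcategory
              (fun Aa : Over R => IsIso (adjS.unit.app ((Over.pullback σ).obj Aa)))))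
        (_ : Over.forget (⟨Over.mk σ, h⟩ :
            ObjectProperty.FullSubcategory
              (fun Aa : Over R => IsIso (adjS.unit.app ((Over.pullback σ).obj Aa)))) ⊣ st),
        Nonempty (MonadicRightAdjoint st) :=
  stmt12_general F σ US adjS hsplit
end

section
/- Let D ⊣ C : A ⇄ P be an adjunction between categories with pullbacks and σ : S → R a Galois descent morphism. If B_b → Q_q is a coequalizer in A/R of a parallel pair f, g : A_a ⇉ B_b whose image under σ* is a split coequalizer lying in the essential image of C_S : P/DS → A/S, then Q_q is σ-split; i.e. Split_R(σ) is closed in A/R under such coequalizers. -/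
/-!
A split coequalizer `π : Y ⟶ Z` makes `Z` a retract of `Y`, so the component at `Z` of any natural
transformation is a retract of its component at `Y`, and retracts of isomorphisms are isomorphisms.
The unit of `Over.post F ⊣ US` is invertible at `σ*B_b`, which lies in the essential image of `US`
(fully faithful because the counit is invertible), hence also at its retract `σ*Q_q`.
-/

open CategoryTheory Limits

def CategoryTheory.IsSplitCoequalizer.retract {C : Type*} [Category C] {X Y Z : C}
    {f g : X ⟶ Y} {π : Y ⟶ Z} (s : IsSplitCoequalizer f g π) : Retract Z Y where
  i := s.rightSection
  r := π
  retract := s.rightSection_π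

lemma CategoryTheory.NatTrans.isIso_app_of_isSplitCoequalizer {C D : Type*} [Category C]
    [Category D] {K L : C ⥤ D} (α : K ⟶ L) {X Y Z : C} {f g : X ⟶ Y} {π : Y ⟶ Z}
    (s : IsSplitCoequalizer f g π) [IsIso (α.app Y)] : IsIso (α.app Z) :=
  (MorphismProperty.isomorphisms D).of_retract (α.retractArrowApp s.retract)
    (MorphismProperty.isomorphisms.infer_property _)

theorem stmt16_general {A P : Type*} [Category A] [Category P] [HasPullbacks A]
    (F : A ⥤ P) {S R : A} (σ : S ⟶ R)
    (US : Over (F.obj S) ⥤ Over S)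
    (adjS : (Over.post F : Over S ⥤ Over (F.obj S)) ⊣ US)
    (hcounit : IsIso adjS.counit)
    {Aa Bb Qq : Over R} (f g : Aa ⟶ Bb) (n : Bb ⟶ Qq)
    (hsplitcoeq : Nonempty
      (IsSplitCoequalizer ((Over.pullback σ).map f) ((Over.pullback σ).map g)
        ((Over.pullback σ).map n)))
    (hB : ∃ X : Over (F.obj S), Nonempty ((Over.pullback σ).obj Bb ≅ US.obj X)) :
    IsIso (adjS.unit.app ((Over.pullback σ).obj Qq)) := by
  obtain ⟨s⟩ := hsplitcoeq
  obtain ⟨X, ⟨e⟩⟩ := hB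
  have hUS := adjS.fullyFaithfulROfIsIsoCounit
  have := hUS.full
  have := hUS.faithful
  have := adjS.isIso_unit_app_of_iso e
  exact adjS.unit.isIso_app_of_isSplitCoequalizer s

/-- Let `F ⊣ U : A ⇄ P` be an adjunction between categories with
pullbacks and `σ : S ⟶ R` a Galois descent morphism.  If `n : B_b ⟶ Q_q` is a
coequalizer in `A/R` of a parallel pair `f, g : A_a ⇉ B_b` whose image under
`σ* = Over.pullback σ` is a split coequalizer with `σ*A_a` and `σ*B_b` lying in the
essential image of `U_S : P/FS ⥤ A/S`, then `Q_q` is `σ`-split; i.e. `Split_R(σ)` is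
closed in `A/R` under such coequalizers. -/
theorem stmt16 {A P : Type*} [Category A] [Category P] [HasPullbacks A] [HasPullbacks P]
    (F : A ⥤ P) (U : P ⥤ A) (adj : F ⊣ U) {S R : A} (σ : S ⟶ R)
    (US : Over (F.obj S) ⥤ Over S)
    (adjS : (Over.post F : Over S ⥤ Over (F.obj S)) ⊣ US)
    [MonadicRightAdjoint (Over.pullback σ)]
    (hcounit : IsIso adjS.counit)
    (hsplit : ∀ X : Over (F.obj S),
      IsIso (adjS.unit.app ((Over.pullback σ).obj ((Over.map σ).obj (US.obj X)))))
    {Aa Bb Qq : Over R} (f g : Aa ⟶ Bb) (n : Bb ⟶ Qq) (w : f ≫ n = g ≫ n)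
    (hcoeq : Nonempty (IsColimit (Cofork.ofπ n w)))
    (hsplitcoeq : Nonempty
      (IsSplitCoequalizer ((Over.pullback σ).map f) ((Over.pullback σ).map g)
        ((Over.pullback σ).map n)))
    (hA : ∃ X : Over (F.obj S), Nonempty ((Over.pullback σ).obj Aa ≅ US.obj X))
    (hB : ∃ X : Over (F.obj S), Nonempty ((Over.pullback σ).obj Bb ≅ US.obj X)) :
    IsIso (adjS.unit.app ((Over.pullback σ).obj Qq)) :=
  stmt16_general F σ US adjS hcounit f g n hsplitcoeq hB
end
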